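/- arXiv:1007.4004 — 2 statements merged into one kernel-verified Lean document; each statement's English description precedes it below -/
import Mathlib

section
/- Let $O$ be the ring of integers of a nonarchimedean local field and $\mathfrak{m}$ its maximal ideal. Let $G$ be a topologically finitely generated profinite group and let $K_n \subset G$ be the intersection of the kernels of all continuous homomorphisms $G \to GL(r, O/\mathfrak{m}^n)$. If $\bigcap_n K_n = \{1\}$, then $G$ embeds as a closed subgroup of a (possibly infinite) product of the finite groups $GL(r, O/\mathfrak{m}^n)$, and in particular $G$ has an open pro-$\ell$ subgroup, where $\ell$ is the residue characteristic of $O$. -/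
/-- A closed subgroup `H` of a topological group is *pro-`ℓ`* if every open normal
subgroup of `H` has index a power of `ℓ`. -/
def IsProL {G : Type*} [Group G] [TopologicalSpace G] (ℓ : ℕ) (H : Subgroup G) : Prop :=
  ∀ U : Subgroup H, IsOpen (U : Set H) → U.Normal → ∃ k : ℕ, U.index = ℓ ^ k

/-- The finite groups `GL(r, O/𝔪ⁿ)` carry the discrete topology. -/
instance glDiscrete (O : Type*) [CommRing O] [IsLocalRing O] (r n : ℕ) :
    TopologicalSpace
      (Matrix.GeneralLinearGroup (Fin r) (O ⧸ (IsLocalRing.maximalIdeal O ^ n))) := ⊥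

/-!
Let `H` be the intersection of the kernels of the continuous homomorphisms `G → GL(r, O/𝔪)`.
Since `G` is topologically finitely generated and `GL(r, O/𝔪)` is finite, there are finitely
many of them, so `H` is open. Every continuous `f : G → GL(r, O/𝔪ⁿ)` maps `H` into the kernel of
reduction mod `𝔪`, whose elements `1 + A` have `A` and `ℓ` nilpotent, hence have `ℓ`-power
order. An open normal subgroup of `H` contains `H` intersected with finitely many of the kernels
`ker f` by compactness and the separation hypothesis, so its index is a power of `ℓ`. The
embedding part is just compactness plus injectivity.
-/

theorem Ideal.pow_pow_sub_one_mem_pow_succ {T : Type*} [CommRing T] {I : Ideal T} {p : ℕ}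
    (hp : (p : T) ∈ I) {x : T} (hx : x - 1 ∈ I) (k : ℕ) : x ^ p ^ k - 1 ∈ I ^ (k + 1) := by
  induction k with
  | zero => simpa using hx
  | succ k ih =>
    set y := x ^ p ^ k
    have hy : y - 1 ∈ I := Ideal.pow_le_self k.succ_ne_zero ih
    have hsum : ∑ i ∈ Finset.range p, y ^ i ∈ I := by
      have : ∑ i ∈ Finset.range p, y ^ i = ∑ i ∈ Finset.range p, (y ^ i - 1) + p := by
        simp [Finset.sum_sub_distrib]
      rw [this]
      exact I.add_mem (I.sum_mem fun i _ => I.mem_of_dvd (sub_one_dvd_pow_sub_one y i) hy) hp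
    have hgeom : x ^ p ^ (k + 1) - 1 = (∑ i ∈ Finset.range p, y ^ i) * (y - 1) := by
      rw [geom_sum_mul, pow_succ, pow_mul]
    rw [hgeom, pow_succ']
    exact Ideal.mul_mem_mul hsum ih

open Polynomial in
theorem exists_pow_pow_eq_one_of_isNilpotent {S : Type*} [Ring S] {p : ℕ} {x : S}
    (hx : IsNilpotent (x - 1)) (hp : IsNilpotent (p : S)) : ∃ k, x ^ p ^ k = 1 := by
  -- `S` need not be commutative, so compute in `ℤ[X]` and evaluate at `X = x`.
  let φ := aeval (R := ℤ) x
  let I : Ideal ℤ[X] := Ideal.span {(p : ℤ[X]), X - 1}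
  have hI : I ≤ (RingHom.ker φ).radical := by
    rw [Ideal.span_le, Set.insert_subset_iff, Set.singleton_subset_iff]
    obtain ⟨m, hm⟩ := hp
    obtain ⟨m', hm'⟩ := hx
    exact ⟨⟨m, by simp [φ, hm]⟩, ⟨m', by simp [φ, hm']⟩⟩
  obtain ⟨k, hk⟩ := Ideal.exists_pow_le_of_le_radical_of_fg hI (Submodule.fg_span (by simp))
  have hmem := Ideal.pow_pow_sub_one_mem_pow_succ (Ideal.subset_span (by simp) : (p : ℤ[X]) ∈ I)
    (Ideal.subset_span (by simp) : X - 1 ∈ I) k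
  refine ⟨k, sub_eq_zero.mp ?_⟩
  simpa [φ] using hk (Ideal.pow_le_pow_right k.le_succ hmem)

namespace Matrix
variable {R : Type*} [CommRing R] {n : Type*} [Fintype n] [DecidableEq n] {J : Ideal R}

theorem pow_mem_matrix_pow {A : Matrix n n R} (hA : A ∈ J.matrix n) (k : ℕ) :
    A ^ k ∈ (J ^ k).matrix n := by
  induction k with
  | zero => simp
  | succ k ih =>
    refine (Ideal.mem_matrix _ _ _).2 fun i j => ?_
    rw [pow_succ A, pow_succ J, mul_apply]
    exact Ideal.sum_mem _ fun l _ => Ideal.mul_mem_mul (ih i l) (hA l j)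

theorem isNilpotent_of_mem_matrix (hJ : IsNilpotent J) {A : Matrix n n R}
    (hA : A ∈ J.matrix n) : IsNilpotent A := by
  obtain ⟨m, hm⟩ := hJ
  exact ⟨m, by simpa [hm] using pow_mem_matrix_pow hA m⟩

theorem natCast_mem_matrix {p : ℕ} (hp : (p : R) ∈ J) : (p : Matrix n n R) ∈ J.matrix n := by
  refine (Ideal.mem_matrix _ _ _).2 fun i j => ?_
  rcases eq_or_ne i j with rfl | hij
  · simpa [natCast_apply] using hp
  · simp [natCast_apply, hij]

theorem GeneralLinearGroup.exists_pow_pow_eq_one_of_map_eq_one {S : Type*} [CommRing S]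
    {π : R →+* S} (hπ : IsNilpotent (RingHom.ker π)) {p : ℕ} (hp : (p : S) = 0)
    {x : GL n R} (hx : map π x = 1) : ∃ k, x ^ p ^ k = 1 := by
  have hx1 : (x : Matrix n n R) - 1 ∈ (RingHom.ker π).matrix n :=
    (Ideal.mem_matrix _ _ _).2 fun i j => by
      simp [sub_apply, one_apply, apply_ite π, ← GeneralLinearGroup.map_apply, hx]
  have hp1 : (p : Matrix n n R) ∈ (RingHom.ker π).matrix n :=
    natCast_mem_matrix (by simpa using hp)
  obtain ⟨k, hk⟩ := exists_pow_pow_eq_one_of_isNilpotent (isNilpotent_of_mem_matrix hπ hx1)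
    (isNilpotent_of_mem_matrix hπ hp1)
  exact ⟨k, Units.ext (by simpa using hk)⟩

end Matrix

theorem Ideal.isNilpotent_ker_factor_pow_one {R : Type*} [CommRing R] (I : Ideal R) {n : ℕ}
    (hn : 1 ≤ n) : IsNilpotent (RingHom.ker (Quotient.factor (pow_le_pow_right hn) :
      R ⧸ I ^ n →+* R ⧸ I ^ 1)) := by
  have hker : RingHom.ker (Quotient.factor (pow_le_pow_right hn) : R ⧸ I ^ n →+* R ⧸ I ^ 1) ≤
      I.map (Quotient.mk _) := by
    intro y hy
    obtain ⟨a, rfl⟩ := Quotient.mk_surjective y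
    rw [RingHom.mem_ker, Quotient.factor_mk, Quotient.eq_zero_iff_mem, pow_one] at hy
    exact mem_map_of_mem _ hy
  refine ⟨n, eq_bot_iff.2 ((pow_right_mono hker n).trans ?_)⟩
  rw [← Ideal.map_pow, map_quotient_self]

section TopologicalGroup
variable {G : Type*} [Group G] [TopologicalSpace G]

theorem MonoidHom.isOpen_ker {Q : Type*} [Group Q] [TopologicalSpace Q] [DiscreteTopology Q]
    {f : G →* Q} (hf : Continuous f) : IsOpen (f.ker : Set G) := by
  rw [MonoidHom.coe_ker]
  exact (isOpen_discrete _).preimage hf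

theorem MonoidHom.isClosed_ker {Q : Type*} [Group Q] [TopologicalSpace Q] [T1Space Q]
    {f : G →* Q} (hf : Continuous f) : IsClosed (f.ker : Set G) := by
  rw [MonoidHom.coe_ker]
  exact isClosed_singleton.preimage hf

theorem finite_continuous_monoidHom [IsTopologicalGroup G] {Q : Type*} [Group Q]
    [TopologicalSpace Q] [T2Space Q] [Finite Q]
    (hfg : ∃ S : Finset G, (Subgroup.closure (S : Set G)).topologicalClosure = ⊤) :
    Finite {f : G →* Q // Continuous f} := by
  obtain ⟨S, hS⟩ := hfg
  have hdense : Dense (Subgroup.closure (S : Set G) : Set G) := by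
    simpa [dense_iff_closure_eq] using congrArg (fun K : Subgroup G => (K : Set G)) hS
  refine Finite.of_injective (fun f (s : (S : Set G)) => f.1 s) fun f f' hff' => ?_
  refine Subtype.ext (DFunLike.coe_injective (Continuous.ext_on hdense f.2 f'.2 ?_))
  exact MonoidHom.eqOn_closure fun s hs => congrFun hff' ⟨s, hs⟩

theorem Subgroup.exists_finset_biInter_subset_of_iInf_eq_bot [CompactSpace G] {ι : Type*}
    {N : ι → Subgroup G} (hN : ∀ i, IsClosed (N i : Set G)) (hbot : ⨅ i, N i = ⊥) {W : Set G}
    (hW : IsOpen W) (h1 : (1 : G) ∈ W) : ∃ s : Finset ι, ⋂ i ∈ s, (N i : Set G) ⊆ W := by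
  have hempty : Wᶜ ∩ ⋂ i, (N i : Set G) = ∅ := by
    rw [← Subgroup.coe_iInf, hbot, Subgroup.coe_bot, Set.inter_singleton_eq_empty]
    exact not_not.2 h1
  obtain ⟨s, hs⟩ := hW.isClosed_compl.isCompact.elim_finite_subfamily_closed _ hN hempty
  refine ⟨s, fun g hg => not_not.1 fun hgW => ?_⟩
  exact Set.eq_empty_iff_forall_notMem.1 hs g ⟨hgW, hg⟩

variable {ι : Type*} {Q : ι → Type*} [∀ i, Group (Q i)] [∀ i, TopologicalSpace (Q i)]

theorem isClosedEmbedding_of_iInf_ker_eq_bot [CompactSpace G] [∀ i, T2Space (Q i)]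
    (f : ∀ i, G →* Q i) (hf : ∀ i, Continuous (f i)) (hbot : ⨅ i, (f i).ker = ⊥) :
    Topology.IsClosedEmbedding (fun g i => f i g) := by
  refine (continuous_pi hf).isClosedEmbedding fun g g' hgg' => ?_
  have : g * g'⁻¹ ∈ ⨅ i, (f i).ker :=
    Subgroup.mem_iInf.2 fun i => by simp [MonoidHom.mem_ker, congrFun hgg' i]
  rwa [hbot, Subgroup.mem_bot, mul_inv_eq_one] at this

theorem isProL_of_iInf_ker_eq_bot [IsTopologicalGroup G] [CompactSpace G] [∀ i, T1Space (Q i)]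
    {ℓ : ℕ} (hℓ : ℓ.Prime) (f : ∀ i, G →* Q i) (hf : ∀ i, Continuous (f i))
    (hbot : ⨅ i, (f i).ker = ⊥) {H : Subgroup G} (hH : IsOpen (H : Set G))
    (hpow : ∀ h ∈ H, ∀ i, ∃ k, f i h ^ ℓ ^ k = 1) : IsProL ℓ H := by
  intro U hU _
  obtain ⟨W, hW, hWU⟩ := isOpen_induced_iff.1 hU
  have hmem : ∀ h : H, (h : G) ∈ W ↔ h ∈ U := fun h => by rw [← SetLike.mem_coe, ← hWU]; rfl
  obtain ⟨s, hs⟩ := Subgroup.exists_finset_biInter_subset_of_iInf_eq_bot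
    (fun i => (f i).isClosed_ker (hf i)) hbot hW ((hmem 1).2 U.one_mem)
  have : CompactSpace H := isCompact_iff_compactSpace.1 (H.isClosed_of_isOpen hH).isCompact
  have : Finite (H ⧸ U) := Subgroup.quotient_finite_of_isOpen U hU
  have : Fact ℓ.Prime := ⟨hℓ⟩
  have hP : IsPGroup ℓ (H ⧸ U) := by
    rintro ⟨h⟩
    choose k hk using hpow h h.2
    refine ⟨s.sup k, (QuotientGroup.eq_one_iff _).2 ((hmem _).1 <| hs <|
      Set.mem_iInter₂.2 fun i hi => ?_)⟩
    rw [SetLike.mem_coe, MonoidHom.mem_ker, Subgroup.coe_pow, map_pow,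
      ← Nat.sub_add_cancel (s.le_sup hi), pow_add, pow_mul', hk, one_pow]
  rw [Subgroup.index_eq_card]
  exact IsPGroup.iff_card.1 hP

end TopologicalGroup

namespace IsLocalRing
variable {O : Type*} [CommRing O] [IsLocalRing O]

instance (r n : ℕ) : DiscreteTopology (GL (Fin r) (O ⧸ maximalIdeal O ^ n)) := ⟨rfl⟩

theorem finite_quotient_maximalIdeal_pow_one [Finite (ResidueField O)] :
    Finite (O ⧸ maximalIdeal O ^ 1) :=
  .of_equiv (ResidueField O) (Ideal.quotEquivOfEq (pow_one _)).symm.toEquiv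

theorem natCast_quotient_maximalIdeal_pow_one {ℓ : ℕ} [CharP (ResidueField O) ℓ] :
    (ℓ : O ⧸ maximalIdeal O ^ 1) = 0 := by
  rw [← map_natCast (Ideal.Quotient.mk _), Ideal.Quotient.eq_zero_iff_mem, pow_one,
    ← residue_eq_zero_iff, map_natCast, CharP.cast_eq_zero]

theorem exists_pow_eq_one_of_mem_iInf_ker_level_one {ℓ : ℕ} [CharP (ResidueField O) ℓ]
    {G : Type*} [Group G] [TopologicalSpace G] {r : ℕ} {g : G}
    (hg : g ∈ ⨅ f : {f : G →* GL (Fin r) (O ⧸ maximalIdeal O ^ 1) // Continuous f}, f.1.ker)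
    {n : ℕ} (f : G →* GL (Fin r) (O ⧸ maximalIdeal O ^ n)) (hf : Continuous f) :
    ∃ k, f g ^ ℓ ^ k = 1 := by
  rcases Nat.eq_zero_or_pos n with rfl | hn
  · have : Subsingleton (O ⧸ maximalIdeal O ^ 0) :=
      Ideal.Quotient.subsingleton_iff.2 (by rw [pow_zero, Ideal.one_eq_top])
    exact ⟨0, Subsingleton.elim _ _⟩
  · let ρ := Matrix.GeneralLinearGroup.map (n := Fin r)
      (Ideal.Quotient.factor (Ideal.pow_le_pow_right hn) :
        O ⧸ maximalIdeal O ^ n →+* O ⧸ maximalIdeal O ^ 1)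
    exact Matrix.GeneralLinearGroup.exists_pow_pow_eq_one_of_map_eq_one
      ((maximalIdeal O).isNilpotent_ker_factor_pow_one hn) natCast_quotient_maximalIdeal_pow_one
      (Subgroup.mem_iInf.1 hg ⟨ρ.comp f, (continuous_of_discreteTopology (f := ρ)).comp hf⟩)

end IsLocalRing

theorem stmt_12_general (ℓ : ℕ) (hℓ : ℓ.Prime)
    (O : Type*) [CommRing O] [IsDomain O] [IsDiscreteValuationRing O]
    [CharP (IsLocalRing.ResidueField O) ℓ] [Finite (IsLocalRing.ResidueField O)]
    (G : Type*) [Group G] [TopologicalSpace G] [IsTopologicalGroup G]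
    [CompactSpace G]
    (hfg : ∃ S : Finset G, (Subgroup.closure (S : Set G)).topologicalClosure = ⊤)
    (r : ℕ)
    (htriv : (⨅ n : ℕ, ⨅ f : {f : G →*
        Matrix.GeneralLinearGroup (Fin r) (O ⧸ (IsLocalRing.maximalIdeal O ^ n)) //
          Continuous f}, (f.1).ker) = ⊥) :
    Topology.IsClosedEmbedding
      (fun (g : G)
        (i : Σ n : ℕ, {f : G →*
          Matrix.GeneralLinearGroup (Fin r) (O ⧸ (IsLocalRing.maximalIdeal O ^ n)) //
            Continuous f}) => i.2.1 g) ∧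
    ∃ H : Subgroup G, IsOpen (H : Set G) ∧ IsProL ℓ H := by
  
  let ι := Σ n : ℕ, {f : G →* GL (Fin r) (O ⧸ IsLocalRing.maximalIdeal O ^ n) // Continuous f}
  let Q : ι → Type _ := fun i => GL (Fin r) (O ⧸ IsLocalRing.maximalIdeal O ^ i.1)
  let φ : ∀ i, G →* Q i := fun i => i.2.1
  have hbot : ⨅ i, (φ i).ker = ⊥ := by rwa [iInf_sigma]
  have := IsLocalRing.finite_quotient_maximalIdeal_pow_one (O := O)
  have : Finite {f : G →* GL (Fin r) (O ⧸ IsLocalRing.maximalIdeal O ^ 1) // Continuous f} :=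
    finite_continuous_monoidHom hfg
  let H := ⨅ f : {f : G →* GL (Fin r) (O ⧸ IsLocalRing.maximalIdeal O ^ 1) // Continuous f},
    f.1.ker
  have hH : IsOpen (H : Set G) := by
    rw [Subgroup.coe_iInf]
    exact isOpen_iInter_of_finite fun f => f.1.isOpen_ker f.2
  exact ⟨isClosedEmbedding_of_iInf_ker_eq_bot φ (fun i => i.2.2) hbot,
    H, hH, isProL_of_iInf_ker_eq_bot hℓ φ (fun i => i.2.2) hbot hH fun g hg i =>
      IsLocalRing.exists_pow_eq_one_of_mem_iInf_ker_level_one hg i.2.1 i.2.2⟩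

/-- **Embedding into a product of the groups `GL(r, O/𝔪ⁿ)`.**
Let `O` be the ring of integers of a nonarchimedean local field with maximal ideal `𝔪`
and residue characteristic `ℓ`.  Let `G` be a topologically finitely generated
profinite group and `K n ⊆ G` the intersection of the kernels of all continuous
homomorphisms `G → GL(r, O/𝔪ⁿ)`.  If `⋂ₙ K n = {1}`, then `G` embeds as a closed
subgroup of a product of the finite groups `GL(r, O/𝔪ⁿ)` (via the tautological map),
and in particular `G` has an open pro-`ℓ` subgroup. -/
theorem stmt_12 (ℓ : ℕ) (hℓ : ℓ.Prime)
    (O : Type*) [CommRing O] [IsDomain O] [IsDiscreteValuationRing O]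
    [CharP (IsLocalRing.ResidueField O) ℓ] [Finite (IsLocalRing.ResidueField O)]
    (G : Type*) [Group G] [TopologicalSpace G] [IsTopologicalGroup G]
    [CompactSpace G] [T2Space G] [TotallyDisconnectedSpace G]
    (hfg : ∃ S : Finset G, (Subgroup.closure (S : Set G)).topologicalClosure = ⊤)
    (r : ℕ)
    (htriv : (⨅ n : ℕ, ⨅ f : {f : G →*
        Matrix.GeneralLinearGroup (Fin r) (O ⧸ (IsLocalRing.maximalIdeal O ^ n)) //
          Continuous f}, (f.1).ker) = ⊥) :
    Topology.IsClosedEmbedding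
      (fun (g : G)
        (i : Σ n : ℕ, {f : G →*
          Matrix.GeneralLinearGroup (Fin r) (O ⧸ (IsLocalRing.maximalIdeal O ^ n)) //
            Continuous f}) => i.2.1 g) ∧
    ∃ H : Subgroup G, IsOpen (H : Set G) ∧ IsProL ℓ H :=
  stmt_12_general ℓ hℓ O G hfg r htriv
end

section
/- Let $C$ be the union of all CM-subfields of $\overline{\mathbb{Q}}$ and $R$ the maximal totally real subfield of $\overline{\mathbb{Q}}$. Then for any totally positive element $d \in R$, one has $C = R(\sqrt{-d})$. -/
/-!
If `K = k⁺(α)` is a CM-field, then `α²` is totally real, and it is totally negative: an embedding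
with `σ(α²) > 0` would send `α`, hence all of `K`, into `ℝ`. So `(α/√-d)² = α²/(-d)` is totally
positive, whence `α/√-d` is totally real and `K ⊆ R(√-d)`. Conversely an element `a + b√-d` of
`R(√-d)` lies in the CM-field `ℚ(a, b, d)(√-d)`.
-/

/-- The maximal totally real subfield `R ⊆ ℚ̄`: the set of elements all of whose
complex conjugates are real. -/
noncomputable def maxTotallyReal : Subfield (AlgebraicClosure ℚ) where
  carrier := {x | ∀ σ : AlgebraicClosure ℚ →+* ℂ, (σ x).im = 0}
  mul_mem' := by
    intro a b ha hb σ
    simp [Complex.mul_im, ha σ, hb σ]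
  one_mem' := by intro σ; simp
  add_mem' := by
    intro a b ha hb σ
    simp [ha σ, hb σ]
  zero_mem' := by intro σ; simp
  neg_mem' := by
    intro a ha σ
    simp [ha σ]
  inv_mem' := by
    intro a ha σ
    simp [Complex.inv_im, ha σ]

/-- A subfield `K ⊆ ℚ̄` is a CM-field if it is finite over `ℚ`, totally imaginary,
and a quadratic extension `K = k⁺(α)`, `α² ∈ k⁺`, `α ∉ k⁺`, of a totally real
subfield `k⁺`. -/
def IsCM (K : Subfield (AlgebraicClosure ℚ)) : Prop :=
  FiniteDimensional ℚ K ∧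
  (∀ φ : K →+* ℂ, ∃ x : K, (φ x).im ≠ 0) ∧
  ∃ (kp : Subfield (AlgebraicClosure ℚ)) (α : AlgebraicClosure ℚ),
    kp ≤ K ∧ (∀ x ∈ kp, ∀ σ : AlgebraicClosure ℚ →+* ℂ, (σ x).im = 0) ∧
    α ∈ K ∧ α ∉ kp ∧ α ^ 2 ∈ kp ∧ K = kp ⊔ Subfield.closure {α}

open scoped ComplexOrder

namespace Complex

theorem im_eq_zero_of_sq_pos {z : ℂ} (h : 0 < z ^ 2) : z.im = 0 := by
  rw [pos_iff, sq, mul_re, mul_im] at h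
  obtain ⟨hre, him⟩ := h
  rcases mul_eq_zero.1 (by linarith : z.re * z.im = 0) with h0 | h0
  · nlinarith [sq_nonneg z.im]
  · exact h0

theorem im_ne_zero_of_sq_neg {z : ℂ} (h : z ^ 2 < 0) : z.im ≠ 0 := by
  intro h0
  rw [neg_iff, sq, mul_re, h0] at h
  nlinarith [sq_nonneg z.re, h.1]

end Complex

namespace Subfield
variable {F : Type*} [Field F] {k : Subfield F} {α : F}

theorem sub_mul_ne_zero_of_add_mul_ne_zero (hα : α ∉ k) {a b : F} (ha : a ∈ k) (hb : b ∈ k)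
    (hab : a + b * α ≠ 0) : a - b * α ≠ 0 := by
  intro h
  by_cases hb0 : b = 0
  · simp_all
  · refine hα ((?_ : α = a / b) ▸ div_mem ha hb)
    rw [eq_div_iff hb0]
    linear_combination -h

def quadraticAdjoin (hα2 : α ^ 2 ∈ k) (hα : α ∉ k) : Subfield F where
  carrier := {x | ∃ a ∈ k, ∃ b ∈ k, x = a + b * α}
  one_mem' := ⟨1, k.one_mem, 0, k.zero_mem, by ring⟩
  zero_mem' := ⟨0, k.zero_mem, 0, k.zero_mem, by ring⟩
  add_mem' := by
    rintro _ _ ⟨a, ha, b, hb, rfl⟩ ⟨c, hc, e, he, rfl⟩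
    exact ⟨a + c, add_mem ha hc, b + e, add_mem hb he, by ring⟩
  neg_mem' := by
    rintro _ ⟨a, ha, b, hb, rfl⟩
    exact ⟨-a, neg_mem ha, -b, neg_mem hb, by ring⟩
  mul_mem' := by
    rintro _ _ ⟨a, ha, b, hb, rfl⟩ ⟨c, hc, e, he, rfl⟩
    exact ⟨a * c + b * e * α ^ 2, add_mem (mul_mem ha hc) (mul_mem (mul_mem hb he) hα2),
      a * e + b * c, add_mem (mul_mem ha he) (mul_mem hb hc), by ring⟩
  inv_mem' := by
    rintro _ ⟨a, ha, b, hb, rfl⟩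
    by_cases hx : a + b * α = 0
    · exact ⟨0, k.zero_mem, 0, k.zero_mem, by simp [hx]⟩
    -- `(a + b α)⁻¹ = (a - b α) / N` with the norm `N = a² - b² α² ∈ k`
    have hN : a ^ 2 - b ^ 2 * α ^ 2 ≠ 0 := by
      rw [show a ^ 2 - b ^ 2 * α ^ 2 = (a + b * α) * (a - b * α) by ring]
      exact mul_ne_zero hx (sub_mul_ne_zero_of_add_mul_ne_zero hα ha hb hx)
    have hNk : a ^ 2 - b ^ 2 * α ^ 2 ∈ k :=
      sub_mem (pow_mem ha 2) (mul_mem (pow_mem hb 2) hα2)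
    refine ⟨a / (a ^ 2 - b ^ 2 * α ^ 2), div_mem ha hNk,
      -b / (a ^ 2 - b ^ 2 * α ^ 2), div_mem (neg_mem hb) hNk, ?_⟩
    field_simp
    ring

theorem exists_add_mul_eq_of_mem_sup_closure_singleton (hα2 : α ^ 2 ∈ k) (hα : α ∉ k) {x : F}
    (hx : x ∈ k ⊔ closure {α}) : ∃ a ∈ k, ∃ b ∈ k, x = a + b * α := by
  have hle : k ⊔ closure {α} ≤ quadraticAdjoin hα2 hα := by
    refine sup_le (fun y hy => ?_) (closure_le.2 ?_)
    · exact ⟨y, hy, 0, k.zero_mem, by ring⟩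
    · rintro _ rfl
      exact ⟨0, k.zero_mem, 1, k.one_mem, by ring⟩
  exact hle hx

theorem finiteDimensional_closure {L : Type*} [Field L] [CharZero L]
    [Algebra.IsAlgebraic ℚ L] {S : Set L} (hS : S.Finite) :
    FiniteDimensional ℚ (Subfield.closure S) := by
  have : FiniteDimensional ℚ (IntermediateField.adjoin ℚ S) := haveI := hS.to_subtype
    IntermediateField.finiteDimensional_adjoin fun x _ => Algebra.IsIntegral.isIntegral x
  have hrange : Set.range (algebraMap ℚ L) ⊆ Subfield.closure S := by
    rintro _ ⟨q, rfl⟩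
    simp [SubfieldClass.ratCast_mem]
  rwa [← sup_eq_right.2 (Subfield.closure_le.2 hrange), ← Subfield.closure_union,
    ← IntermediateField.adjoin_toSubfield]

theorem exists_ringHom_comp_subtype_eq {L M : Type*} [Field L] [Field M] [IsAlgClosed M]
    (K : Subfield L) [Algebra.IsAlgebraic K L] (φ : K →+* M) :
    ∃ σ : L →+* M, σ.comp K.subtype = φ :=
  let _ : Algebra K M := φ.toAlgebra
  ⟨(IsAlgClosed.lift : L →ₐ[K] M).toRingHom, RingHom.ext (IsAlgClosed.lift : L →ₐ[K] M).commutes⟩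

end Subfield

local notation "ℚ̄" => AlgebraicClosure ℚ

-- The library instance is stated for `AlgebraicClosure.instAlgebra`, which instance search does
-- not identify with the `ℚ`-algebra structure `DivisionRing.toRatAlgebra` it finds on `ℚ̄`.
instance : Algebra.IsAlgebraic ℚ ℚ̄ := AlgebraicClosure.isAlgebraic ℚ

theorem nonempty_ringHom_algebraicClosure_rat_complex : Nonempty (ℚ̄ →+* ℂ) :=
  ⟨(IsAlgClosed.lift : ℚ̄ →ₐ[ℚ] ℂ).toRingHom⟩

theorem mem_maxTotallyReal {x : ℚ̄} :
    x ∈ maxTotallyReal ↔ ∀ σ : ℚ̄ →+* ℂ, (σ x).im = 0 := Iff.rfl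

def IsTotallyNegative (x : ℚ̄) : Prop := ∀ σ : ℚ̄ →+* ℂ, σ x < 0

theorem IsTotallyNegative.mem_maxTotallyReal {x : ℚ̄} (hx : IsTotallyNegative x) :
    x ∈ maxTotallyReal :=
  _root_.mem_maxTotallyReal.2 fun σ => (Complex.neg_iff.1 (hx σ)).2

theorem im_map_ne_zero_of_isTotallyNegative_sq {s : ℚ̄} (hs : IsTotallyNegative (s ^ 2))
    (σ : ℚ̄ →+* ℂ) : (σ s).im ≠ 0 :=
  Complex.im_ne_zero_of_sq_neg (map_pow σ s 2 ▸ hs σ)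

theorem notMem_maxTotallyReal_of_isTotallyNegative_sq {s : ℚ̄} (hs : IsTotallyNegative (s ^ 2)) :
    s ∉ maxTotallyReal := fun h =>
  nonempty_ringHom_algebraicClosure_rat_complex.elim fun σ =>
    im_map_ne_zero_of_isTotallyNegative_sq hs σ (mem_maxTotallyReal.1 h σ)

theorem isTotallyNegative_sq_of_totallyImaginary {K kp : Subfield ℚ̄} {α : ℚ̄}
    (hkp : kp ≤ maxTotallyReal) (hα2 : α ^ 2 ∈ kp) (hα0 : α ≠ 0)
    (hK : K = kp ⊔ Subfield.closure {α}) (him : ∀ φ : K →+* ℂ, ∃ x : K, (φ x).im ≠ 0) :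
    IsTotallyNegative (α ^ 2) := by
  intro σ
  have him2 : (σ (α ^ 2)).im = 0 := mem_maxTotallyReal.1 (hkp hα2) σ
  rcases lt_trichotomy (σ (α ^ 2)).re 0 with hneg | hzero | hpos
  · exact Complex.neg_iff.2 ⟨hneg, him2⟩
  · exact absurd (Complex.ext hzero him2) ((map_ne_zero σ).2 (pow_ne_zero 2 hα0))
  · have hσα : (σ α).im = 0 :=
      Complex.im_eq_zero_of_sq_pos (map_pow σ α 2 ▸ Complex.pos_iff.2 ⟨hpos, him2.symm⟩)
    have hKreal : K ≤ ((starRingEnd ℂ).comp σ).eqLocusField σ := hK ▸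
      sup_le (fun y hy => Complex.conj_eq_iff_im.2 (mem_maxTotallyReal.1 (hkp hy) σ))
        (Subfield.closure_le.2 (by rintro _ rfl; exact Complex.conj_eq_iff_im.2 hσα))
    obtain ⟨x, hx⟩ := him (σ.comp K.subtype)
    exact absurd (Complex.conj_eq_iff_im.1 (hKreal x.2)) hx

theorem IsCM.le_sup_closure {K : Subfield ℚ̄} (hK : IsCM K) {s : ℚ̄}
    (hs : IsTotallyNegative (s ^ 2)) : K ≤ maxTotallyReal ⊔ Subfield.closure {s} := by
  obtain ⟨-, him, kp, α, -, hkp, -, hαkp, hα2, hK⟩ := hK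
  have hα0 : α ≠ 0 := fun h => hαkp (h ▸ kp.zero_mem)
  have hs0 : s ≠ 0 := fun h =>
    notMem_maxTotallyReal_of_isTotallyNegative_sq hs (h ▸ maxTotallyReal.zero_mem)
  have hαs : α / s ∈ maxTotallyReal := mem_maxTotallyReal.2 fun σ => by
    apply Complex.im_eq_zero_of_sq_pos
    rw [← map_pow, div_pow, map_div₀]
    exact div_pos_of_neg_of_neg (isTotallyNegative_sq_of_totallyImaginary hkp hα2 hα0 hK him σ)
      (hs σ)
  rw [hK]
  refine sup_le ((show kp ≤ maxTotallyReal from hkp).trans le_sup_left)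
    (Subfield.closure_le.2 (Set.singleton_subset_iff.2 ?_))
  rw [← div_mul_cancel₀ α hs0]
  exact mul_mem (le_sup_left (b := Subfield.closure {s}) hαs)
    (le_sup_right (a := maxTotallyReal) (Subfield.subset_closure rfl))

theorem isCM_closure_insert {T : Set ℚ̄} (hT : T.Finite) (hTR : T ⊆ maxTotallyReal) {s : ℚ̄}
    (hs2 : s ^ 2 ∈ Subfield.closure T) (hs : IsTotallyNegative (s ^ 2)) :
    IsCM (Subfield.closure (insert s T)) := by
  have hsK : s ∈ Subfield.closure (insert s T) := Subfield.subset_closure (Set.mem_insert s T)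
  have hkp : Subfield.closure T ≤ maxTotallyReal := Subfield.closure_le.2 hTR
  refine ⟨Subfield.finiteDimensional_closure (hT.insert s), fun φ => ?_, Subfield.closure T, s,
    Subfield.closure_mono (Set.subset_insert s T), fun x hx => hkp hx, hsK,
    fun h => notMem_maxTotallyReal_of_isTotallyNegative_sq hs (hkp h), hs2, ?_⟩
  · have := Algebra.IsAlgebraic.tower_top (K := ℚ) (A := ℚ̄) (Subfield.closure (insert s T))
    obtain ⟨σ, rfl⟩ := Subfield.exists_ringHom_comp_subtype_eq _ φ
    exact ⟨⟨s, hsK⟩, im_map_ne_zero_of_isTotallyNegative_sq hs σ⟩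
  · rw [Set.insert_eq, Subfield.closure_union, sup_comm]

theorem exists_isCM_mem_of_mem_sup_closure {s : ℚ̄} (hs : IsTotallyNegative (s ^ 2)) {x : ℚ̄}
    (hx : x ∈ maxTotallyReal ⊔ Subfield.closure {s}) : ∃ K, IsCM K ∧ x ∈ K := by
  obtain ⟨a, ha, b, hb, rfl⟩ := Subfield.exists_add_mul_eq_of_mem_sup_closure_singleton
    hs.mem_maxTotallyReal (notMem_maxTotallyReal_of_isTotallyNegative_sq hs) hx
  have hT : ({a, b, s ^ 2} : Set ℚ̄) ⊆ maxTotallyReal := by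
    rintro _ (rfl | rfl | rfl)
    exacts [ha, hb, hs.mem_maxTotallyReal]
  have hmem : ∀ y ∈ ({s, a, b, s ^ 2} : Set ℚ̄), y ∈ Subfield.closure {s, a, b, s ^ 2} :=
    fun y hy => Subfield.subset_closure hy
  refine ⟨_, isCM_closure_insert (Set.toFinite _) hT (Subfield.subset_closure (by simp)) hs, ?_⟩
  exact add_mem (hmem a (by simp)) (mul_mem (hmem b (by simp)) (hmem s (by simp)))

/-- **The union of all CM-fields is `R(√-d)`.**
Let `C ⊆ ℚ̄` be the union of all CM-subfields and `R = maxTotallyReal` the maximal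
totally real subfield of `ℚ̄`.  Then for any totally positive `d ∈ R` and any square
root `s` of `-d` in `ℚ̄`, one has `C = R(√-d)`. -/
theorem stmt_19 (d : AlgebraicClosure ℚ) (hdR : d ∈ maxTotallyReal)
    (hdpos : ∀ σ : AlgebraicClosure ℚ →+* ℂ, 0 < (σ d).re)
    (s : AlgebraicClosure ℚ) (hs : s ^ 2 = -d) :
    {x : AlgebraicClosure ℚ | ∃ K : Subfield (AlgebraicClosure ℚ), IsCM K ∧ x ∈ K}
      = ↑(maxTotallyReal ⊔ Subfield.closure {s}) := by
  have hs2 : IsTotallyNegative (s ^ 2) := fun σ => by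
    rw [hs, map_neg, neg_lt_zero]
    exact Complex.pos_iff.2 ⟨hdpos σ, (mem_maxTotallyReal.1 hdR σ).symm⟩
  ext x
  exact ⟨fun ⟨K, hK, hxK⟩ => hK.le_sup_closure hs2 hxK, exists_isCM_mem_of_mem_sup_closure hs2⟩
end
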